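/- Let a(n) be defined by ∑_{n≥0} a(n) qⁿ = (−q;q)∞²/(q;q)∞. Then as formal power series with coefficients in ℤ/8ℤ, ∑_{n≥0} a(n) qⁿ ≡ 2·(−q;−q)∞ − (q;q)∞ (mod 8). -/

import Mathlib

open PowerSeries Finset

/-- The power series `∏_{k=0}^∞ g k`, defined coefficientwise via stabilized
finite partial products (valid when `g k ≡ 1` modulo degree `> k`). -/
noncomputable def iProd (g : ℕ → PowerSeries ℤ) : PowerSeries ℤ :=
  PowerSeries.mk fun n => PowerSeries.coeff n (∏ k ∈ Finset.range (n + 1), g k)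

/-- `(q^j; q^j)_∞ = ∏_{k≥1} (1 - q^{jk})` as a formal power series. -/
noncomputable def F (j : ℕ) : PowerSeries ℤ :=
  iProd fun k => 1 - (PowerSeries.X : PowerSeries ℤ) ^ (j * (k + 1))

/-- `(-q; q)_∞ = ∏_{k≥1} (1 + q^k)` as a formal power series. -/
noncomputable def Fneg : PowerSeries ℤ :=
  iProd fun k => 1 + (PowerSeries.X : PowerSeries ℤ) ^ (k + 1)

/-- Multiplicative inverse of a power series with constant coefficient `1`. -/
noncomputable def psInv (f : PowerSeries ℤ) : PowerSeries ℤ := PowerSeries.invOfUnit f 1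
/-- `a n` is the coefficient of `q^n` in `(-q;q)_∞^2 / (q;q)_∞`. -/
noncomputable def a (n : ℕ) : ℤ := PowerSeries.coeff n (Fneg ^ 2 * psInv (F 1))

/-- `(−q;−q)∞ = ∏_{k≥1}(1 − (−q)^k)` as a formal power series. -/
noncomputable def FnegQ : PowerSeries ℤ :=
  iProd fun k => 1 - (-(PowerSeries.X : PowerSeries ℤ)) ^ (k + 1)
/-!
Write `Eⱼ = (qʲ; qʲ)∞`, `P = (-q; q)∞` and `M = (-q; -q)∞`, all as `X`-adic limits of their
partial products. Euler's identity `P E₁ = E₂`, together with `M E₁ E₄ = E₂³` (obtained by splitting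
`M` and `P` into the factors of odd and of even index), turns the claim, after multiplication by
the unit `E₁² E₄`, into `8 ∣ E₂² E₄ + E₁⁴ E₄ - 2 E₁² E₂³`. Since `E₂ = φ E₁` and `E₄ = φ E₂` for the
substitution `φ : q ↦ q²`, and `f² ≡ φ f (mod 2)` for every integer power series `f`, this is an
instance of a congruence that holds in any commutative ring with an endomorphism `φ` satisfying
`x² ≡ φ x (mod 2)`.
-/

/-- Writing `f ^ 2 = φ f + 2 a` gives `φ (φ f) = φ f ^ 2 - 2 φ a`, and then the left-hand side is
`4 φ f ^ 2 (a ^ 2 - φ a)` modulo `8`. -/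
theorem eight_dvd_of_frobenius_lift {R : Type*} [CommRing R] (φ : R →+* R)
    (hφ : ∀ x, (2 : R) ∣ x ^ 2 - φ x) (f : R) :
    (8 : R) ∣ φ f ^ 2 * φ (φ f) + f ^ 4 * φ (φ f) - 2 * f ^ 2 * φ f ^ 3 := by
  obtain ⟨a, ha⟩ := hφ f
  obtain ⟨b, hb⟩ := hφ a
  have hsq : f ^ 2 = φ f + 2 * a := by linear_combination ha
  have hφφ : φ (φ f) = φ f ^ 2 - 2 * φ a := by
    rw [← map_pow, hsq, map_add, map_mul, map_ofNat]
    ring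
  refine ⟨φ f ^ 2 * b - a * φ f * φ a - a ^ 2 * φ a, ?_⟩
  rw [hφφ, show f ^ 4 = (f ^ 2) ^ 2 by ring, hsq]
  linear_combination 4 * φ f ^ 2 * hb

theorem dvd_prod_sub_one {ι R : Type*} [CommRing R] {a : R} {s : Finset ι} {g : ι → R}
    (h : ∀ i ∈ s, a ∣ g i - 1) : a ∣ ∏ i ∈ s, g i - 1 :=
  prod_induction g (fun x => a ∣ x - 1)
    (fun x y hx hy => by
      rw [show x * y - 1 = (x - 1) * y + (y - 1) by ring]
      exact dvd_add (hx.mul_right y) hy)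
    (by simp) h

namespace PowerSeries

theorem C_dvd_iff_dvd_coeff {R : Type*} [CommSemiring R] (r : R) (φ : R⟦X⟧) :
    C r ∣ φ ↔ ∀ n, r ∣ coeff n φ := by
  constructor
  · rintro ⟨ψ, rfl⟩ n
    exact ⟨coeff n ψ, coeff_C_mul n ψ r⟩
  · intro h
    choose c hc using h
    exact ⟨mk c, ext fun n => by rw [coeff_C_mul, coeff_mk, hc]⟩

theorem natCast_dvd_pow_sub_expand (p : ℕ) [hp : Fact p.Prime] (f : ℤ⟦X⟧) :
    (p : ℤ⟦X⟧) ∣ f ^ p - expand p hp.out.ne_zero f := by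
  have hfrob : map (Int.castRingHom (ZMod p)) (f ^ p - expand p hp.out.ne_zero f) = 0 := by
    have h := MvPowerSeries.map_frobenius_expand p hp.out.ne_zero
      (f := map (Int.castRingHom (ZMod p)) f)
    rw [ZMod.frobenius_zmod, MvPowerSeries.map_id] at h
    rw [map_sub, map_pow, map_expand, ← h]
    exact sub_eq_zero.2 rfl
  rw [← map_natCast C, C_dvd_iff_dvd_coeff]
  intro n
  have h := congrArg (coeff n) hfrob
  rw [coeff_map, map_zero] at h
  exact (ZMod.intCast_zmod_eq_zero_iff_dvd _ p).1 h

open scoped WithPiTopology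

theorem continuous_expand {R : Type*} [CommRing R] [UniformSpace R] [DiscreteUniformity R]
    (p : ℕ) (hp : p ≠ 0) : Continuous (expand p hp : R⟦X⟧ → R⟦X⟧) := by
  rw [show (expand p hp : R⟦X⟧ → R⟦X⟧) = subst ((X : R⟦X⟧) ^ p) from funext (expand_apply p hp)]
  exact MvPowerSeries.continuous_subst (HasSubst.X_pow hp).const

end PowerSeries

open scoped PowerSeries.WithPiTopology

section InfiniteProducts

variable {g : ℕ → ℤ⟦X⟧}

theorem coeff_prod_eq_coeff_prod_range (hg : ∀ k, X ^ (k + 1) ∣ g k - 1) {n : ℕ}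
    {s : Finset ℕ} (hs : range (n + 1) ⊆ s) :
    coeff n (∏ k ∈ s, g k) = coeff n (∏ k ∈ range (n + 1), g k) := by
  have htail : X ^ (n + 1) ∣ ∏ k ∈ s \ range (n + 1), g k - 1 :=
    dvd_prod_sub_one fun k hk => by
      have hk : n + 1 ≤ k := by simpa using (mem_sdiff.1 hk).2
      exact (pow_dvd_pow X (by omega)).trans (hg k)
  rw [← prod_sdiff hs, ← sub_eq_zero, ← map_sub,
    show (∏ k ∈ s \ range (n + 1), g k) * ∏ k ∈ range (n + 1), g k - ∏ k ∈ range (n + 1), g k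
      = (∏ k ∈ s \ range (n + 1), g k - 1) * ∏ k ∈ range (n + 1), g k by ring]
  exact X_pow_dvd_iff.1 (htail.mul_right _) n (Nat.lt_succ_self n)

theorem hasProd_iProd (hg : ∀ k, X ^ (k + 1) ∣ g k - 1) : HasProd g (iProd g) := by
  rw [HasProd, WithPiTopology.tendsto_iff_coeff_tendsto]
  intro n
  apply tendsto_nhds_of_eventually_eq
  filter_upwards [Filter.eventually_ge_atTop (range (n + 1))] with s hs
  rw [iProd, coeff_mk, coeff_prod_eq_coeff_prod_range hg hs]

end InfiniteProducts

/-- `(-q; q²)∞ = ∏_{k≥0} (1 + q^{2k+1})`. -/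
noncomputable def FnegOdd : ℤ⟦X⟧ :=
  iProd fun k => 1 + X ^ (2 * k + 1)

theorem hasProd_F {j : ℕ} (hj : 0 < j) : HasProd (fun k => 1 - X ^ (j * (k + 1))) (F j) :=
  hasProd_iProd fun k => by
    rw [sub_sub_cancel_left, dvd_neg]
    exact pow_dvd_pow X (Nat.le_mul_of_pos_left _ hj)

theorem hasProd_Fneg : HasProd (fun k => 1 + X ^ (k + 1)) Fneg :=
  hasProd_iProd fun k => by rw [add_sub_cancel_left]

theorem hasProd_FnegQ : HasProd (fun k => 1 - (-X) ^ (k + 1)) FnegQ :=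
  hasProd_iProd fun k => by
    rw [sub_sub_cancel_left, dvd_neg, neg_pow]
    exact dvd_mul_left _ _

theorem hasProd_FnegOdd : HasProd (fun k => 1 + X ^ (2 * k + 1)) FnegOdd :=
  hasProd_iProd fun k => by
    rw [add_sub_cancel_left]
    exact pow_dvd_pow X (by omega)

theorem constantCoeff_F {j : ℕ} (hj : 0 < j) : constantCoeff (F j) = 1 := by
  rw [← coeff_zero_eq_constantCoeff_apply]
  simp [F, iProd, hj.ne']

theorem isUnit_F {j : ℕ} (hj : 0 < j) : IsUnit (F j) := by
  rw [isUnit_iff_constantCoeff, constantCoeff_F hj]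
  exact isUnit_one

theorem Fneg_mul_F_one : Fneg * F 1 = F 2 := by
  refine (hasProd_Fneg.mul (hasProd_F one_pos)).unique ?_
  convert hasProd_F two_pos using 2 with k
  ring

theorem expand_F {j : ℕ} (hj : 0 < j) : expand 2 two_ne_zero (F j) = F (2 * j) := by
  refine ((hasProd_F hj).map _ (continuous_expand 2 two_ne_zero)).unique ?_
  convert hasProd_F (by omega : 0 < 2 * j) using 2 with k
  simp [← pow_mul]
  ring_nf

theorem FnegQ_eq_FnegOdd_mul_F_two : FnegQ = FnegOdd * F 2 := by
  refine hasProd_FnegQ.unique (HasProd.even_mul_odd ?_ ?_)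
  · convert hasProd_FnegOdd using 2 with k
    rw [Odd.neg_pow ⟨k, rfl⟩]
    ring
  · convert hasProd_F two_pos using 2 with k
    rw [Even.neg_pow ⟨k + 1, by ring⟩]
    ring_nf

theorem Fneg_eq_FnegOdd_mul_expand_Fneg : Fneg = FnegOdd * expand 2 two_ne_zero Fneg := by
  refine hasProd_Fneg.unique (HasProd.even_mul_odd hasProd_FnegOdd ?_)
  convert hasProd_Fneg.map _ (continuous_expand 2 two_ne_zero) using 2 with k
  simp [← pow_mul]
  ring_nf

theorem FnegQ_mul_F_one_mul_F_four : FnegQ * F 1 * F 4 = F 2 ^ 3 := by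
  have hF4 : F 4 = expand 2 two_ne_zero Fneg * F 2 := by
    simpa [expand_F] using (congrArg (expand 2 two_ne_zero) Fneg_mul_F_one).symm
  have h := Fneg_mul_F_one
  rw [Fneg_eq_FnegOdd_mul_expand_Fneg] at h
  rw [FnegQ_eq_FnegOdd_mul_F_two, hF4]
  linear_combination F 2 ^ 2 * h

theorem eight_dvd_Fneg_sq_add_F_one_sq_sub : (8 : ℤ⟦X⟧) ∣ Fneg ^ 2 + F 1 ^ 2 - 2 * F 1 * FnegQ := by
  rw [← ((isUnit_F one_pos).pow 2 |>.mul (isUnit_F (by norm_num : 0 < 4))).dvd_mul_left]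
  have hφ (f : ℤ⟦X⟧) : (2 : ℤ⟦X⟧) ∣ f ^ 2 - expand 2 two_ne_zero f := by
    exact_mod_cast natCast_dvd_pow_sub_expand 2 f
  have hE₂ : expand 2 two_ne_zero (F 1) = F 2 := expand_F one_pos
  have hE₄ : expand 2 two_ne_zero (F 2) = F 4 := expand_F two_pos
  have key := eight_dvd_of_frobenius_lift (expand 2 two_ne_zero).toRingHom hφ (F 1)
  simp only [AlgHom.toRingHom_eq_coe, RingHom.coe_coe, hE₂, hE₄] at key
  convert key using 1
  linear_combination F 4 * (F 1 * Fneg + F 2) * Fneg_mul_F_one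
    - 2 * F 1 ^ 2 * FnegQ_mul_F_one_mul_F_four

/-- `∑ a(n) qⁿ ≡ 2(−q;−q)∞ − (q;q)∞ (mod 8)`, coefficientwise. -/
theorem a_congruence_mod_eight (n : ℕ) :
    (8 : ℤ) ∣ (a n - (2 * PowerSeries.coeff n FnegQ - PowerSeries.coeff n (F 1))) := by
  have hinv : F 1 * psInv (F 1) = 1 :=
    mul_invOfUnit _ _ (by rw [constantCoeff_F one_pos]; rfl)
  have hseries : Fneg ^ 2 * psInv (F 1) - (2 * FnegQ - F 1)
      = psInv (F 1) * (Fneg ^ 2 + F 1 ^ 2 - 2 * F 1 * FnegQ) := by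
    linear_combination (2 * FnegQ - F 1) * hinv
  have h8 := dvd_mul_of_dvd_right eight_dvd_Fneg_sq_add_F_one_sq_sub (psInv (F 1))
  rw [← hseries, ← map_ofNat C, C_dvd_iff_dvd_coeff] at h8
  have h8n := h8 n
  rwa [map_sub, map_sub, ← map_ofNat C 2, coeff_C_mul] at h8n
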